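/- For every fixed integer h ≥ 1, lim_{m→∞} μ_h(m) = μ_h, where μ_h = − sup_{λ > 0, η ∈ ℝ^h, η₀ ∈ ℝ} g(λ, η, η₀); i.e., the discretized dual optimal values converge, as the frequency grid is refined, to the continuous dual optimal value. -/

import Mathlib

/-!
For fixed `(λ, η, η₀)` the discrete objective is maximised pointwise by `ν_i = ν(θ_i)`, and the
maximum is a Riemann sum of the continuous dual integrand; these Riemann sums converge to `g`
uniformly on compact sets of parameters `λ > 0`. Once `2m > h`, orthogonality of `cos kθ, sin kθ`
on the grid bounds every discrete objective by
`½ log (2λM) − λP + ½ − (η₀² + ∑ ηₖ²) / (4λM)`, `M = max S_w`, which tends to `−∞` as `λ → 0`,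
as `λ → ∞` and as `(η, η₀) → ∞`. So all suprema are decided on one compact set of parameters, where
uniform convergence passes to the suprema.
-/

open MeasureTheory Real Filter

noncomputable section

def muI : Measure ℝ := volume.restrict (Set.Icc (-π) π)

def L2I (f : ℝ → ℝ) : Prop := MemLp f 2 muI

def causalZero (a b : ℝ → ℝ) (n : ℕ) : Prop :=
  (∫ θ in (-π)..π, a θ * Real.cos ((n : ℝ) * θ))
    + (∫ θ in (-π)..π, b θ * Real.sin ((n : ℝ) * θ)) = 0

def powerAB (Sw a b : ℝ → ℝ) : ℝ :=
  (1 / (2 * π)) * ∫ θ in (-π)..π, ((a θ) ^ 2 + (b θ) ^ 2) * Sw θ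

def rateAB (a b : ℝ → ℝ) : ℝ :=
  (1 / (4 * π)) * ∫ θ in (-π)..π, Real.log ((1 + a θ) ^ 2 + (b θ) ^ 2)

/-- Feedback capacity: causality constraints for all `n ≥ 0`. -/
def Cfb (Sw : ℝ → ℝ) (P : ℝ) : ℝ :=
  sSup {R | ∃ a b : ℝ → ℝ, L2I a ∧ L2I b ∧ powerAB Sw a b ≤ P ∧
    (∀ n : ℕ, causalZero a b n) ∧ R = rateAB a b}

/-- `C_fb(h)`: causality constraints only for `0 ≤ n ≤ h`. -/
def CfbH (Sw : ℝ → ℝ) (P : ℝ) (h : ℕ) : ℝ :=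
  sSup {R | ∃ a b : ℝ → ℝ, L2I a ∧ L2I b ∧ powerAB Sw a b ≤ P ∧
    (∀ n : ℕ, n ≤ h → causalZero a b n) ∧ R = rateAB a b}

def dotA (h : ℕ) (η : Fin h → ℝ) (θ : ℝ) : ℝ :=
  ∑ k : Fin h, η k * Real.cos (((k.1 + 1 : ℕ) : ℝ) * θ)

def dotB (h : ℕ) (η : Fin h → ℝ) (θ : ℝ) : ℝ :=
  ∑ k : Fin h, η k * Real.sin (((k.1 + 1 : ℕ) : ℝ) * θ)

/-- `r²(θ)`. -/
def rsq (Sw : ℝ → ℝ) {h : ℕ} (lam : ℝ) (η : Fin h → ℝ) (η0 θ : ℝ) : ℝ :=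
  (2 * lam * Sw θ + dotA h η θ + η0) ^ 2 + (dotB h η θ) ^ 2

/-- `ν(θ) = (−r² + √(r⁴ + 8λS_w r²))/2`. -/
def nuf (Sw : ℝ → ℝ) {h : ℕ} (lam : ℝ) (η : Fin h → ℝ) (η0 θ : ℝ) : ℝ :=
  (-(rsq Sw lam η η0 θ)
    + Real.sqrt ((rsq Sw lam η η0 θ) ^ 2 + 8 * lam * Sw θ * rsq Sw lam η η0 θ)) / 2

/-- The dual function `g(λ,η,η₀)`.  (In Lean, `x / 0 = 0`, which implements the
convention `r²/(2ν) = 0` when `ν = 0`.) -/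
def gdual (Sw : ℝ → ℝ) (P : ℝ) {h : ℕ} (lam : ℝ) (η : Fin h → ℝ) (η0 : ℝ) : ℝ :=
  (1 / (2 * π)) * (∫ θ in (-π)..π,
      ((1 / 2) * Real.log (2 * lam * Sw θ - nuf Sw lam η η0 θ)
        - rsq Sw lam η η0 θ / (2 * nuf Sw lam η η0 θ) + lam * Sw θ))
    - lam * P + η0 + 1 / 2

/-- Grid points `θ_i = −π + (π/m) i`, `i = 0,…,2m−1`. -/
def θd (m : ℕ) (i : Fin (2 * m)) : ℝ := -π + (π / (m : ℝ)) * (i.1 : ℝ)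

/-- Discretized dual objective. -/
def gdisc (Sw : ℝ → ℝ) (P : ℝ) {h : ℕ} (m : ℕ)
    (lam : ℝ) (η : Fin h → ℝ) (η0 : ℝ) (ν : Fin (2 * m) → ℝ) : ℝ :=
  (1 / (2 * (m : ℝ))) * ∑ i : Fin (2 * m),
    ((1 / 2) * Real.log (2 * lam * Sw (θd m i) - ν i) + lam * Sw (θd m i)
      - rsq Sw lam η η0 (θd m i) / (2 * ν i) - lam * P + η0 + 1 / 2)

/-- Feasible values of the discretized dual problem; the case `ν_i = 0` with
`r²(θ_i) > 0` (formally value `−∞`) is excluded from the feasible set. -/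
def DdiscSet (Sw : ℝ → ℝ) (P : ℝ) (h m : ℕ) : Set ℝ :=
  {y | ∃ (lam : ℝ) (η : Fin h → ℝ) (η0 : ℝ) (ν : Fin (2 * m) → ℝ),
    0 < lam ∧ (∀ i, 0 ≤ ν i ∧ ν i < 2 * lam * Sw (θd m i)) ∧
    (∀ i, ν i = 0 → rsq Sw lam η η0 (θd m i) = 0) ∧
    y = gdisc Sw P m lam η η0 ν}

/-- `μ_h(m)`. -/
def muDisc (Sw : ℝ → ℝ) (P : ℝ) (h m : ℕ) : ℝ := - sSup (DdiscSet Sw P h m)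


open Topology

/-- Off a compact set every `f m` stays below `sSup (g '' D)` through the majorant `B`; on it
`f m` is uniformly close to `g`. -/
theorem tendsto_sSup_image_of_tendstoUniformlyOn_of_coercive {X ι : Type*} [TopologicalSpace X]
    {l : Filter ι} [l.NeBot] {D : Set X} {f : ι → X → ℝ} {g B : X → ℝ} (hD : D.Nonempty)
    (hfg : ∀ K ⊆ D, IsCompact K → TendstoUniformlyOn f g l K)
    (hfB : ∀ᶠ m in l, ∀ x ∈ D, f m x ≤ B x) (hB : BddAbove (B '' D))
    (hBK : ∀ c, ∃ K ⊆ D, IsCompact K ∧ ∀ x ∈ D, c < B x → x ∈ K) :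
    Tendsto (fun m => sSup (f m '' D)) l (𝓝 (sSup (g '' D))) := by
  have hpt : ∀ x ∈ D, Tendsto (f · x) l (𝓝 (g x)) := fun x hx =>
    (hfg {x} (Set.singleton_subset_iff.2 hx) isCompact_singleton).tendsto_at rfl
  have hgB : ∀ x ∈ D, g x ≤ B x := fun x hx =>
    le_of_tendsto (hpt x hx) (hfB.mono fun m hm => hm x hx)
  obtain ⟨b, hb⟩ := hB
  have hg : BddAbove (g '' D) :=
    ⟨b, Set.forall_mem_image.2 fun x hx => (hgB x hx).trans (hb (Set.mem_image_of_mem B hx))⟩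
  set S := sSup (g '' D)
  have hupper : ∀ ε > 0, ∀ᶠ m in l, ∀ x ∈ D, f m x ≤ S + ε := fun ε hε => by
    obtain ⟨K, hKD, hK, hBK⟩ := hBK S
    filter_upwards [Metric.tendstoUniformlyOn_iff.1 (hfg K hKD hK) ε hε, hfB]
      with m hclose hmB x hx
    by_cases hxK : x ∈ K
    · have := hclose x hxK
      rw [Real.dist_eq, abs_lt] at this
      linarith [le_csSup hg (Set.mem_image_of_mem g hx)]
    · exact (hmB x hx).trans ((not_lt.1 fun h => hxK (hBK x hx h)).trans (by linarith))
  refine tendsto_order.2 ⟨fun a ha => ?_, fun a ha => ?_⟩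
  · obtain ⟨_, ⟨x₀, hx₀, rfl⟩, hax₀⟩ := exists_lt_of_lt_csSup (hD.image g) ha
    filter_upwards [(hpt x₀ hx₀).eventually (lt_mem_nhds hax₀), hupper 1 one_pos]
      with m hm hbdd
    exact hm.trans_le (le_csSup ⟨S + 1, Set.forall_mem_image.2 hbdd⟩ (Set.mem_image_of_mem _ hx₀))
  · filter_upwards [hupper ((a - S) / 2) (by linarith)] with m hm
    exact (csSup_le (hD.image _) (Set.forall_mem_image.2 hm)).trans_lt (by linarith)

/-- The maximiser over `t ∈ [0, c)` of `log (c - t) / 2 - r / (2 t)`;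
`nuf` is `optNu (2 λ S_w) r²`. -/
def optNu (c r : ℝ) : ℝ := (-r + √(r ^ 2 + 4 * c * r)) / 2

def nuObjective (c r t : ℝ) : ℝ := (1 / 2) * Real.log (c - t) - r / (2 * t)

section OptNu

variable {c r : ℝ}

lemma optNu_sq (hc : 0 ≤ c) (hr : 0 ≤ r) : optNu c r ^ 2 = r * (c - optNu c r) := by
  have h : √(r ^ 2 + 4 * c * r) ^ 2 = r ^ 2 + 4 * c * r := Real.sq_sqrt (by positivity)
  unfold optNu
  linear_combination h / 4

lemma optNu_nonneg (hc : 0 ≤ c) (hr : 0 ≤ r) : 0 ≤ optNu c r := by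
  have : r ≤ √(r ^ 2 + 4 * c * r) := Real.le_sqrt_of_sq_le (by nlinarith)
  unfold optNu
  linarith

lemma optNu_lt (hc : 0 < c) (hr : 0 ≤ r) : optNu c r < c := by
  have : √(r ^ 2 + 4 * c * r) < r + 2 * c :=
    (Real.sqrt_lt' (by linarith)).2 (by nlinarith)
  unfold optNu
  linarith

lemma optNu_eq_zero_iff (hc : 0 < c) (hr : 0 ≤ r) : optNu c r = 0 ↔ r = 0 := by
  refine ⟨fun h => ?_, fun h => by simp [optNu, h]⟩
  have hsq := optNu_sq hc.le hr
  have hlt := optNu_lt hc hr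
  rw [h] at hsq hlt
  nlinarith

lemma optNu_pos (hc : 0 < c) (hr : 0 < r) : 0 < optNu c r :=
  (optNu_nonneg hc.le hr.le).lt_of_ne' fun h => hr.ne' ((optNu_eq_zero_iff hc hr.le).1 h)

lemma div_two_mul_optNu (hc : 0 < c) (hr : 0 ≤ r) :
    r / (2 * optNu c r) = optNu c r / (2 * (c - optNu c r)) := by
  rcases hr.eq_or_lt with rfl | hr
  · simp [(optNu_eq_zero_iff hc le_rfl).2 rfl]
  · have hν := optNu_pos hc hr
    have hcν : 0 < c - optNu c r := by linarith [optNu_lt hc hr.le]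
    rw [div_eq_div_iff (by positivity) (by positivity)]
    linear_combination (-2) * optNu_sq hc.le hr.le

lemma nuObjective_le_optNu {t : ℝ} (hc : 0 < c) (hr : 0 ≤ r) (ht : 0 ≤ t) (htc : t < c)
    (hzero : t = 0 → r = 0) : nuObjective c r t ≤ nuObjective c r (optNu c r) := by
  unfold nuObjective
  rcases hr.eq_or_lt with rfl | hr
  · rw [(optNu_eq_zero_iff hc le_rfl).2 rfl]
    simp only [zero_div, sub_zero]
    gcongr
    linarith
  have ht : 0 < t := ht.lt_of_ne' fun h => hr.ne' (hzero h)
  set ν := optNu c r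
  have hν : 0 < ν := optNu_pos hc hr
  have hcν : 0 < c - ν := by linarith [optNu_lt hc hr.le]
  have hr' : r = ν ^ 2 / (c - ν) := by
    rw [eq_div_iff hcν.ne']; exact (optNu_sq hc.le hr.le).symm
  -- `log x ≤ x - 1` at `x = (c - t)/(c - ν)`, and the remaining gap is a square
  have hlog : Real.log (c - t) - Real.log (c - ν) ≤ (c - t) / (c - ν) - 1 := by
    rw [← Real.log_div (by linarith) hcν.ne']
    exact Real.log_le_sub_one_of_pos (by apply div_pos <;> linarith)
  have hgap : r / (2 * t) - r / (2 * ν) - (1 / 2) * ((c - t) / (c - ν) - 1)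
      = (ν - t) ^ 2 / (2 * t * (c - ν)) := by
    rw [hr']; field_simp; ring
  have : 0 ≤ (ν - t) ^ 2 / (2 * t * (c - ν)) := by positivity
  linarith

lemma nuObjective_le {t : ℝ} (hr : 0 ≤ r) (ht : 0 ≤ t) (htc : t < c)
    (hzero : t = 0 → r = 0) : nuObjective c r t ≤ (1 / 2) * Real.log c - r / (2 * c) := by
  unfold nuObjective
  have hlog : Real.log (c - t) ≤ Real.log c := Real.log_le_log (by linarith) (by linarith)
  have hdiv : r / (2 * c) ≤ r / (2 * t) := by
    rcases ht.eq_or_lt with rfl | ht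
    · simp [hzero rfl]
    · gcongr
  linarith

end OptNu

/-- The integrand of `gdual`, rewritten with `div_two_mul_optNu` so that it is continuous. -/
def dualIntegrand (Sw : ℝ → ℝ) {h : ℕ} (lam : ℝ) (η : Fin h → ℝ) (η0 θ : ℝ) : ℝ :=
  (1 / 2) * Real.log (2 * lam * Sw θ - nuf Sw lam η η0 θ)
    - nuf Sw lam η η0 θ / (2 * (2 * lam * Sw θ - nuf Sw lam η η0 θ)) + lam * Sw θ

section DualIntegrand

variable {Sw : ℝ → ℝ} {h : ℕ} {lam : ℝ} {η : Fin h → ℝ} {η0 θ : ℝ}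

lemma rsq_nonneg : 0 ≤ rsq Sw lam η η0 θ := by unfold rsq; positivity

lemma nuf_eq_optNu : nuf Sw lam η η0 θ = optNu (2 * lam * Sw θ) (rsq Sw lam η η0 θ) := by
  unfold nuf optNu; ring_nf

lemma nuf_lt (hl : 0 < lam) (hS : 0 < Sw θ) : nuf Sw lam η η0 θ < 2 * lam * Sw θ :=
  nuf_eq_optNu ▸ optNu_lt (by positivity) rsq_nonneg

lemma integrand_eq_dualIntegrand (hl : 0 < lam) (hS : 0 < Sw θ) :
    (1 / 2) * Real.log (2 * lam * Sw θ - nuf Sw lam η η0 θ)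
      - rsq Sw lam η η0 θ / (2 * nuf Sw lam η η0 θ) + lam * Sw θ
      = dualIntegrand Sw lam η η0 θ := by
  rw [dualIntegrand, nuf_eq_optNu, div_two_mul_optNu (by positivity) rsq_nonneg]

end DualIntegrand

/-- The dual variables `(λ, η, η₀)`. -/
abbrev DualParam (h : ℕ) : Type := ℝ × (Fin h → ℝ) × ℝ

lemma continuousOn_dualIntegrand {Sw : ℝ → ℝ} (hSc : Continuous Sw) (hSpos : ∀ θ, 0 < Sw θ)
    (h : ℕ) :
    ContinuousOn (fun p : DualParam h × ℝ => dualIntegrand Sw p.1.1 p.1.2.1 p.1.2.2 p.2)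
      {p | 0 < p.1.1} := by
  have hnuf : Continuous (fun p : DualParam h × ℝ => nuf Sw p.1.1 p.1.2.1 p.1.2.2 p.2) := by
    unfold nuf rsq dotA dotB; fun_prop
  have hgapc : Continuous
      (fun p : DualParam h × ℝ => 2 * p.1.1 * Sw p.2 - nuf Sw p.1.1 p.1.2.1 p.1.2.2 p.2) :=
    (by fun_prop : Continuous fun p : DualParam h × ℝ => 2 * p.1.1 * Sw p.2).sub hnuf
  have hgap : ∀ p ∈ {p : DualParam h × ℝ | 0 < p.1.1},
      2 * p.1.1 * Sw p.2 - nuf Sw p.1.1 p.1.2.1 p.1.2.2 p.2 ≠ 0 :=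
    fun p hp => (sub_pos.2 (nuf_lt hp (hSpos p.2))).ne'
  unfold dualIntegrand
  refine ContinuousOn.add (ContinuousOn.sub ?_ ?_) (by fun_prop)
  · exact continuousOn_const.mul (hgapc.continuousOn.log hgap)
  · exact hnuf.continuousOn.div (continuous_const.mul hgapc).continuousOn
      fun p hp => mul_ne_zero two_ne_zero (hgap p hp)

lemma θd_mem {m : ℕ} (i : Fin (2 * m)) : θd m i ∈ Set.Icc (-π) π := by
  have hm : (0 : ℝ) < m := by have := i.2; exact_mod_cast (by omega : 0 < m)
  have hi : (i : ℝ) ≤ 2 * m := by exact_mod_cast i.2.le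
  have hstep : (π / m) * (2 * m) = 2 * π := by field_simp
  unfold θd
  constructor <;> nlinarith [pi_pos, div_pos pi_pos hm, (i.1.cast_nonneg : (0 : ℝ) ≤ i)]

lemma abs_mul_sub_integral_le {F : ℝ → ℝ} {a b ω : ℝ} (hab : a ≤ b)
    (hF : IntervalIntegrable F volume a b) (hω : ∀ t ∈ Set.Ioc a b, |F a - F t| ≤ ω) :
    |(b - a) * F a - ∫ t in a..b, F t| ≤ (b - a) * ω := by
  have heq : (b - a) * F a - ∫ t in a..b, F t = ∫ t in a..b, (F a - F t) := by
    rw [intervalIntegral.integral_sub intervalIntegrable_const hF,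
      intervalIntegral.integral_const, smul_eq_mul]
  have hbound : ∀ t ∈ Set.uIoc a b, ‖F a - F t‖ ≤ ω := fun t ht => hω t ((Set.uIoc_of_le hab) ▸ ht)
  have := intervalIntegral.norm_integral_le_of_norm_le_const hbound
  rw [heq, ← Real.norm_eq_abs]
  simpa [abs_of_nonneg (sub_nonneg.2 hab), mul_comm] using this

lemma abs_riemannSum_sub_integral_le {F : ℝ → ℝ} {a δ ω : ℝ} (hδ : 0 ≤ δ) (N : ℕ)
    (hF : ContinuousOn F (Set.Icc a (a + N * δ)))
    (hω : ∀ u ∈ Set.Icc a (a + N * δ), ∀ v ∈ Set.Icc a (a + N * δ), |u - v| ≤ δ →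
      |F u - F v| ≤ ω) :
    |δ * ∑ j ∈ Finset.range N, F (a + j * δ) - ∫ t in a..a + N * δ, F t| ≤ N * δ * ω := by
  induction N with
  | zero => simp
  | succ N ih =>
    set b := a + N * δ
    have hb : a + (N + 1 : ℕ) * δ = b + δ := by push_cast; ring
    rw [hb] at hF hω ⊢
    have hab : a ≤ b := by simp only [b]; nlinarith [(N.cast_nonneg : (0 : ℝ) ≤ N)]
    have hsub : Set.Icc a b ⊆ Set.Icc a (b + δ) := Set.Icc_subset_Icc le_rfl (by linarith)
    have hcell : Set.Icc b (b + δ) ⊆ Set.Icc a (b + δ) := Set.Icc_subset_Icc hab le_rfl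
    have hlast := abs_mul_sub_integral_le (by linarith) ((hF.mono hcell).intervalIntegrable_of_Icc
      (by linarith)) fun t ht => hω b ⟨hab, by linarith⟩ t (hcell (Set.Ioc_subset_Icc_self ht))
        (by rw [abs_sub_comm, abs_of_nonneg (by linarith [ht.1])]; linarith [ht.2])
    rw [add_sub_cancel_left] at hlast
    have hprev := ih (hF.mono hsub) fun u hu v hv => hω u (hsub hu) v (hsub hv)
    rw [← intervalIntegral.integral_add_adjacent_intervals
      ((hF.mono hsub).intervalIntegrable_of_Icc hab)
      ((hF.mono hcell).intervalIntegrable_of_Icc (by linarith)), Finset.sum_range_succ]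
    calc |δ * (∑ j ∈ Finset.range N, F (a + j * δ) + F b)
          - ((∫ t in a..b, F t) + ∫ t in b..b + δ, F t)|
        = |(δ * ∑ j ∈ Finset.range N, F (a + j * δ) - ∫ t in a..b, F t)
          + (δ * F b - ∫ t in b..b + δ, F t)| := by ring_nf
      _ ≤ N * δ * ω + δ * ω := (abs_add_le _ _).trans (add_le_add hprev hlast)
      _ = (N + 1 : ℕ) * δ * ω := by push_cast; ring

lemma abs_gridMean_sub_mean_le {F : ℝ → ℝ} {m : ℕ} (hm : 0 < m)
    (hF : ContinuousOn F (Set.Icc (-π) π)) {ω : ℝ}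
    (hω : ∀ u ∈ Set.Icc (-π) π, ∀ v ∈ Set.Icc (-π) π, |u - v| ≤ π / m → |F u - F v| ≤ ω) :
    |(1 / (2 * (m : ℝ))) * ∑ i : Fin (2 * m), F (θd m i)
      - (1 / (2 * π)) * ∫ θ in (-π)..π, F θ| ≤ ω := by
  have hmR : (0 : ℝ) < m := by exact_mod_cast hm
  have hend : -π + (2 * m : ℕ) * (π / m) = π := by push_cast; field_simp; ring
  have hR := abs_riemannSum_sub_integral_le (a := -π) (div_pos pi_pos hmR).le (2 * m)
    (by rw [hend]; exact hF) (by rw [hend]; exact hω)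
  rw [hend, ← Fin.sum_univ_eq_sum_range (fun j => F (-π + j * (π / m)))] at hR
  have hgrid : ∀ i : Fin (2 * m), θd m i = -π + i * (π / m) := fun i => by rw [θd]; ring
  have hscale : (1 / (2 * (m : ℝ))) * ∑ i : Fin (2 * m), F (θd m i)
      - (1 / (2 * π)) * ∫ θ in (-π)..π, F θ
      = (1 / (2 * π)) * (π / m * ∑ i : Fin (2 * m), F (-π + i * (π / m))
        - ∫ θ in (-π)..π, F θ) := by
    simp only [hgrid]; field_simp
  rw [hscale, abs_mul, abs_of_pos (by positivity)]
  calc (1 / (2 * π)) * |π / m * ∑ i : Fin (2 * m), F (-π + i * (π / m)) - ∫ θ in (-π)..π, F θ|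
      ≤ (1 / (2 * π)) * ((2 * m : ℕ) * (π / m) * ω) := by gcongr
    _ = ω := by push_cast; field_simp

lemma tendstoUniformlyOn_gridMean {X : Type*} [PseudoMetricSpace X] {F : X → ℝ → ℝ} {K : Set X}
    (hK : IsCompact K) (hF : ContinuousOn (Function.uncurry F) (K ×ˢ Set.Icc (-π) π)) :
    TendstoUniformlyOn (fun (m : ℕ) x => (1 / (2 * (m : ℝ))) * ∑ i : Fin (2 * m), F x (θd m i))
      (fun x => (1 / (2 * π)) * ∫ θ in (-π)..π, F x θ) atTop K := by
  rw [Metric.tendstoUniformlyOn_iff]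
  intro ε hε
  obtain ⟨δ, hδ, hunif⟩ := Metric.uniformContinuousOn_iff.1
    ((hK.prod isCompact_Icc).uniformContinuousOn_of_continuous hF) (ε / 2) (half_pos hε)
  filter_upwards [eventually_gt_atTop 0,
    (tendsto_const_div_atTop_nhds_zero_nat π).eventually (gt_mem_nhds hδ)] with m hm hmδ x hx
  have hFx : ContinuousOn (F x) (Set.Icc (-π) π) :=
    hF.comp (Continuous.prodMk_right x).continuousOn fun θ hθ => ⟨hx, hθ⟩
  rw [Real.dist_eq, abs_sub_comm]
  refine (abs_gridMean_sub_mean_le hm hFx fun u hu v hv huv => ?_).trans_lt (half_lt_self hε)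
  have hdist : dist (x, u) (x, v) < δ := by
    rw [Prod.dist_eq, dist_self, Real.dist_eq, max_eq_right (abs_nonneg _)]
    exact huv.trans_lt hmδ
  exact (hunif (x, u) ⟨hx, hu⟩ (x, v) ⟨hx, hv⟩ hdist).le

lemma sum_cos_grid {m : ℕ} {n : ℤ} (hn : n ≠ 0) (hnm : |n| < 2 * m) :
    ∑ i : Fin (2 * m), Real.cos (n * θd m i) = 0 := by
  have hm : 2 * m ≠ 0 := by have := (abs_nonneg n).trans_lt hnm; omega
  set ζ : ℂ := Complex.exp (2 * π * Complex.I / (2 * m : ℕ))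
  have hζ : IsPrimitiveRoot ζ (2 * m) := Complex.isPrimitiveRoot_exp (2 * m) hm
  have hζn : ζ ^ n ≠ 1 := fun h =>
    hn (Int.eq_zero_of_abs_lt_dvd ((hζ.zpow_eq_one_iff_dvd n).1 h) (by exact_mod_cast hnm))
  have hterm : ∀ i : Fin (2 * m), Complex.exp ((n * θd m i : ℝ) * Complex.I)
      = Complex.exp (-(n * π) * Complex.I) * (ζ ^ n) ^ (i : ℕ) := fun i => by
    rw [← Complex.exp_int_mul, ← Complex.exp_nat_mul, ← Complex.exp_add, θd]
    congr 1
    push_cast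
    field_simp
  have hgeom : ∑ i : Fin (2 * m), (ζ ^ n) ^ (i : ℕ) = 0 := by
    rw [Fin.sum_univ_eq_sum_range (fun i => (ζ ^ n) ^ i), geom_sum_eq hζn, ← zpow_natCast,
      ← zpow_mul, mul_comm, zpow_mul, zpow_natCast, hζ.pow_eq_one, one_zpow, sub_self, zero_div]
  have := congrArg Complex.re (show ∑ i : Fin (2 * m),
      Complex.exp ((n * θd m i : ℝ) * Complex.I) = 0 by
    rw [Finset.sum_congr rfl fun i _ => hterm i, ← Finset.mul_sum, hgeom, mul_zero])
  simpa only [Complex.re_sum, Complex.exp_ofReal_mul_I_re, Complex.zero_re] using this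

lemma sum_cos_sub_grid {m n : ℕ} (hn : n ≤ 2 * m) (j k : Fin n) :
    ∑ i : Fin (2 * m), Real.cos ((((j : ℤ) - k : ℤ) : ℝ) * θd m i)
      = if j = k then 2 * (m : ℝ) else 0 := by
  split_ifs with hjk
  · subst hjk
    simp
  · refine sum_cos_grid (by rw [sub_ne_zero]; exact_mod_cast Fin.val_ne_of_ne hjk) ?_
    rw [abs_sub_lt_iff]
    omega

lemma sum_trigPoly_sq_grid {m n : ℕ} (hn : n ≤ 2 * m) (c : Fin n → ℝ) :
    ∑ i : Fin (2 * m), ((∑ k, c k * Real.cos ((k : ℕ) * θd m i)) ^ 2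
      + (∑ k, c k * Real.sin ((k : ℕ) * θd m i)) ^ 2) = 2 * m * ∑ k, c k ^ 2 := by
  have hexpand : ∀ θ : ℝ, (∑ k, c k * Real.cos ((k : ℕ) * θ)) ^ 2
      + (∑ k, c k * Real.sin ((k : ℕ) * θ)) ^ 2
      = ∑ j, ∑ k, c j * c k * Real.cos ((((j : ℤ) - k : ℤ) : ℝ) * θ) := fun θ => by
    simp only [sq, Finset.sum_mul_sum, ← Finset.sum_add_distrib]
    refine Finset.sum_congr rfl fun j _ => Finset.sum_congr rfl fun k _ => ?_
    push_cast
    rw [sub_mul, Real.cos_sub]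
    ring
  simp only [hexpand]
  rw [Finset.sum_comm]
  simp_rw [Finset.sum_comm (γ := Fin (2 * m)), ← Finset.mul_sum, sum_cos_sub_grid hn]
  simp [Finset.mul_sum, sq, mul_comm]

section GridSums

variable {h m : ℕ} (η : Fin h → ℝ) (η0 : ℝ)

lemma sum_dotA_grid (hhm : h < 2 * m) : ∑ i : Fin (2 * m), dotA h η (θd m i) = 0 := by
  unfold dotA
  rw [Finset.sum_comm]
  refine Finset.sum_eq_zero fun k _ => ?_
  rw [← Finset.mul_sum, mul_eq_zero]
  right
  have := sum_cos_grid (m := m) (n := ((k : ℕ) + 1 : ℕ)) (by omega) (by rw [abs_lt]; omega)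
  simpa only [Int.cast_natCast] using this

lemma sum_sq_add_sq_grid (hhm : h < 2 * m) :
    ∑ i : Fin (2 * m), ((dotA h η (θd m i) + η0) ^ 2 + dotB h η (θd m i) ^ 2)
      = 2 * m * (η0 ^ 2 + ∑ k, η k ^ 2) := by
  have hcos : ∀ θ, dotA h η θ + η0
      = ∑ k : Fin (h + 1), (Fin.cons η0 η : Fin (h + 1) → ℝ) k * Real.cos ((k : ℕ) * θ) :=
    fun θ => by simp [Fin.sum_univ_succ, dotA, add_comm]
  have hsin : ∀ θ, dotB h η θ
      = ∑ k : Fin (h + 1), (Fin.cons η0 η : Fin (h + 1) → ℝ) k * Real.sin ((k : ℕ) * θ) :=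
    fun θ => by simp [Fin.sum_univ_succ, dotB]
  simp only [hcos, hsin]
  rw [sum_trigPoly_sq_grid (by omega), Fin.sum_univ_succ]
  simp

end GridSums

/-- Evaluated at `Q = η₀² + ∑ ηₖ²` and `M ≥ max S_w`, this bounds `gdiscOpt` as soon as `2m > h`. -/
def dualMajorant (M P lam Q : ℝ) : ℝ :=
  (1 / 2) * Real.log (2 * lam * M) - lam * P + 1 / 2 - Q / (4 * lam * M)

section DualMajorant

variable {M P lam Q : ℝ}

lemma dualMajorant_le (hM : 0 < M) (hP : 0 < P) (hl : 0 < lam) (hQ : 0 ≤ Q) :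
    dualMajorant M P lam Q ≤ (1 / 2) * Real.log (2 * M / P) - lam * P / 2 := by
  have hsplit : Real.log (2 * lam * M) = Real.log (lam * P) + Real.log (2 * M / P) := by
    rw [← Real.log_mul (by positivity) (by positivity)]
    congr 1
    field_simp
  have := Real.log_le_sub_one_of_pos (mul_pos hl hP)
  have : 0 ≤ Q / (4 * lam * M) := by positivity
  unfold dualMajorant
  linarith

lemma exists_bounds_of_lt_dualMajorant (hM : 0 < M) (hP : 0 < P) (c : ℝ) :
    ∃ l₁ l₂ R : ℝ, 0 < l₁ ∧ ∀ lam Q : ℝ, 0 < lam → 0 ≤ Q → c < dualMajorant M P lam Q →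
      lam ∈ Set.Icc l₁ l₂ ∧ Q ≤ R := by
  set l₂ := (Real.log (2 * M / P) - 2 * c) / P
  refine ⟨Real.exp (2 * c - 1) / (2 * M), l₂,
    4 * l₂ * M * ((1 / 2) * Real.log (2 * l₂ * M) + 1 / 2 - c), by positivity,
    fun lam Q hl hQ hc => ?_⟩
  have hQ' : 0 ≤ Q / (4 * lam * M) := by positivity
  have hlog : 2 * c - 1 < Real.log (2 * lam * M) := by
    unfold dualMajorant at hc; nlinarith [mul_pos hl hP]
  have hl₁ : Real.exp (2 * c - 1) / (2 * M) ≤ lam := by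
    rw [div_le_iff₀ (by positivity)]
    linarith [(Real.lt_log_iff_exp_lt (by positivity)).1 hlog]
  have hl₂ : lam ≤ l₂ := by
    have := hc.trans_le (dualMajorant_le hM hP hl hQ)
    rw [le_div_iff₀ hP]
    linarith
  refine ⟨⟨hl₁, hl₂⟩, ?_⟩
  have hgap : 0 < (1 / 2) * Real.log (2 * lam * M) + 1 / 2 - c := by linarith
  have hQlt : Q < 4 * lam * M * ((1 / 2) * Real.log (2 * lam * M) + 1 / 2 - c) := by
    have : Q / (4 * lam * M) < (1 / 2) * Real.log (2 * lam * M) + 1 / 2 - c := by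
      unfold dualMajorant at hc; nlinarith [mul_pos hl hP]
    rwa [div_lt_iff₀ (by positivity), mul_comm] at this
  have hmono : Real.log (2 * lam * M) ≤ Real.log (2 * l₂ * M) :=
    Real.log_le_log (by positivity) (by gcongr)
  calc Q ≤ 4 * lam * M * ((1 / 2) * Real.log (2 * lam * M) + 1 / 2 - c) := hQlt.le
    _ ≤ 4 * l₂ * M * ((1 / 2) * Real.log (2 * l₂ * M) + 1 / 2 - c) := by
      gcongr
      exact mul_nonneg (mul_nonneg zero_le_four (hl.trans_le hl₂).le) hM.le

end DualMajorant

def gdiscOpt (Sw : ℝ → ℝ) (P : ℝ) {h : ℕ} (m : ℕ) (lam : ℝ) (η : Fin h → ℝ) (η0 : ℝ) : ℝ :=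
  gdisc Sw P m lam η η0 fun i => nuf Sw lam η η0 (θd m i)

section DiscreteDual

variable {Sw : ℝ → ℝ} {P : ℝ} {h m : ℕ} {lam : ℝ} {η : Fin h → ℝ} {η0 : ℝ}

lemma gdisc_le_gdiscOpt (hS : ∀ θ, 0 < Sw θ) (hl : 0 < lam) {ν : Fin (2 * m) → ℝ}
    (hν : ∀ i, 0 ≤ ν i ∧ ν i < 2 * lam * Sw (θd m i))
    (hzero : ∀ i, ν i = 0 → rsq Sw lam η η0 (θd m i) = 0) :
    gdisc Sw P m lam η η0 ν ≤ gdiscOpt Sw P m lam η η0 := by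
  unfold gdiscOpt gdisc
  refine mul_le_mul_of_nonneg_left (Finset.sum_le_sum fun i _ => ?_) (by positivity)
  have := nuObjective_le_optNu (mul_pos (mul_pos two_pos hl) (hS (θd m i))) rsq_nonneg
    (hν i).1 (hν i).2 (hzero i)
  rw [← nuf_eq_optNu] at this
  unfold nuObjective at this
  linarith

lemma gdiscOpt_mem_DdiscSet (hS : ∀ θ, 0 < Sw θ) (hl : 0 < lam) :
    gdiscOpt Sw P m lam η η0 ∈ DdiscSet Sw P h m := by
  have hc : ∀ i, 0 < 2 * lam * Sw (θd m i) := fun i => by have := hS (θd m i); positivity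
  refine ⟨lam, η, η0, _, hl, fun i => ⟨?_, nuf_lt hl (hS _)⟩, fun i hi => ?_, rfl⟩
  · rw [nuf_eq_optNu]; exact optNu_nonneg (hc i).le rsq_nonneg
  · rw [nuf_eq_optNu] at hi; exact (optNu_eq_zero_iff (hc i) rsq_nonneg).1 hi

lemma gdiscOpt_eq (hS : ∀ θ, 0 < Sw θ) (hm : 0 < m) (hl : 0 < lam) :
    gdiscOpt Sw P m lam η η0 = (1 / (2 * (m : ℝ))) * ∑ i : Fin (2 * m),
      dualIntegrand Sw lam η η0 (θd m i) - lam * P + η0 + 1 / 2 := by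
  have hterm : ∀ i : Fin (2 * m),
      (1 / 2) * Real.log (2 * lam * Sw (θd m i) - nuf Sw lam η η0 (θd m i)) + lam * Sw (θd m i)
        - rsq Sw lam η η0 (θd m i) / (2 * nuf Sw lam η η0 (θd m i)) - lam * P + η0 + 1 / 2
      = dualIntegrand Sw lam η η0 (θd m i) + (-lam * P + η0 + 1 / 2) := fun i => by
    rw [← integrand_eq_dualIntegrand hl (hS _)]; ring
  unfold gdiscOpt gdisc
  simp only [hterm, Finset.sum_add_distrib, Finset.sum_const, Finset.card_univ, Fintype.card_fin,
    nsmul_eq_mul]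
  have : (m : ℝ) ≠ 0 := by positivity
  push_cast
  field_simp
  ring

lemma gdual_eq (hS : ∀ θ, 0 < Sw θ) (hl : 0 < lam) :
    gdual Sw P lam η η0 = (1 / (2 * π)) * (∫ θ in (-π)..π, dualIntegrand Sw lam η η0 θ)
      - lam * P + η0 + 1 / 2 := by
  unfold gdual
  rw [intervalIntegral.integral_congr fun θ _ => integrand_eq_dualIntegrand hl (hS θ)]

lemma integrand_nuf_le {M θ : ℝ} (hl : 0 < lam) (hS : 0 < Sw θ) (hSM : Sw θ ≤ M) :
    (1 / 2) * Real.log (2 * lam * Sw θ - nuf Sw lam η η0 θ) + lam * Sw θ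
      - rsq Sw lam η η0 θ / (2 * nuf Sw lam η η0 θ)
      ≤ (1 / 2) * Real.log (2 * lam * M) - dotA h η θ - η0
        - ((dotA h η θ + η0) ^ 2 + dotB h η θ ^ 2) / (4 * lam * M) := by
  have hc : 0 < 2 * lam * Sw θ := by positivity
  have hobj := nuObjective_le (t := nuf Sw lam η η0 θ) rsq_nonneg
    (nuf_eq_optNu ▸ optNu_nonneg hc.le rsq_nonneg) (nuf_lt hl hS)
    fun h0 => (optNu_eq_zero_iff hc rsq_nonneg).1 (nuf_eq_optNu ▸ h0)
  unfold nuObjective at hobj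
  have hlog : Real.log (2 * lam * Sw θ) ≤ Real.log (2 * lam * M) :=
    Real.log_le_log hc (by gcongr)
  set q := (dotA h η θ + η0) ^ 2 + dotB h η θ ^ 2
  have hexpand : rsq Sw lam η η0 θ / (2 * (2 * lam * Sw θ))
      = lam * Sw θ + (dotA h η θ + η0) + q / (4 * lam * Sw θ) := by
    unfold rsq; field_simp; ring
  have hq : q / (4 * lam * M) ≤ q / (4 * lam * Sw θ) := by gcongr
  linarith

lemma gdiscOpt_le_dualMajorant {M : ℝ} (hS : ∀ θ, 0 < Sw θ)
    (hM : ∀ θ ∈ Set.Icc (-π) π, Sw θ ≤ M) (hhm : h < 2 * m) (hl : 0 < lam) :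
    gdiscOpt Sw P m lam η η0 ≤ dualMajorant M P lam (η0 ^ 2 + ∑ k, η k ^ 2) := by
  have hm : (0 : ℝ) < m := by exact_mod_cast (by omega : 0 < m)
  unfold gdiscOpt gdisc
  calc (1 / (2 * (m : ℝ))) * ∑ i : Fin (2 * m),
        ((1 / 2) * Real.log (2 * lam * Sw (θd m i) - nuf Sw lam η η0 (θd m i))
          + lam * Sw (θd m i) - rsq Sw lam η η0 (θd m i) / (2 * nuf Sw lam η η0 (θd m i))
          - lam * P + η0 + 1 / 2)
      ≤ (1 / (2 * (m : ℝ))) * ∑ i : Fin (2 * m),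
        (((1 / 2) * Real.log (2 * lam * M) - lam * P + 1 / 2) - dotA h η (θd m i)
          - ((dotA h η (θd m i) + η0) ^ 2 + dotB h η (θd m i) ^ 2) / (4 * lam * M)) := by
        refine mul_le_mul_of_nonneg_left (Finset.sum_le_sum fun i _ => ?_) (by positivity)
        linarith [integrand_nuf_le hl (hS (θd m i)) (hM _ (θd_mem i)) (η := η) (η0 := η0)]
    _ = dualMajorant M P lam (η0 ^ 2 + ∑ k, η k ^ 2) := by
        rw [Finset.sum_sub_distrib, Finset.sum_sub_distrib, sum_dotA_grid η hhm, ← Finset.sum_div,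
          sum_sq_add_sq_grid η η0 hhm, Finset.sum_const, Finset.card_univ, Fintype.card_fin,
          nsmul_eq_mul, dualMajorant]
        push_cast
        field_simp
        ring

end DiscreteDual

section ParameterSpace

variable {Sw : ℝ → ℝ} {P : ℝ} {h : ℕ}

lemma sSup_DdiscSet_eq (hS : ∀ θ, 0 < Sw θ) (m : ℕ) :
    sSup (DdiscSet Sw P h m) = sSup ((fun x : DualParam h =>
      gdiscOpt Sw P m x.1 x.2.1 x.2.2) '' {x | 0 < x.1}) :=
  csSup_eq_csSup_of_forall_exists_le
    (fun _ ⟨lam, η, η0, _, hl, hν, hzero, hy⟩ =>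
      ⟨_, ⟨(lam, η, η0), hl, rfl⟩, hy ▸ gdisc_le_gdiscOpt hS hl hν hzero⟩)
    (fun _ ⟨_, hx, hy⟩ => ⟨_, hy ▸ gdiscOpt_mem_DdiscSet hS hx, le_rfl⟩)

lemma tendstoUniformlyOn_gdiscOpt (hSc : Continuous Sw) (hS : ∀ θ, 0 < Sw θ)
    {K : Set (DualParam h)} (hKD : K ⊆ {x | 0 < x.1}) (hK : IsCompact K) :
    TendstoUniformlyOn (fun m x => gdiscOpt Sw P m x.1 x.2.1 x.2.2)
      (fun x => gdual Sw P x.1 x.2.1 x.2.2) atTop K := by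
  have hcont : ContinuousOn (Function.uncurry fun (x : DualParam h) θ =>
      dualIntegrand Sw x.1 x.2.1 x.2.2 θ) (K ×ˢ Set.Icc (-π) π) :=
    (continuousOn_dualIntegrand hSc hS h).mono fun p hp => hKD hp.1
  have hR := tendstoUniformlyOn_gridMean hK hcont
  rw [Metric.tendstoUniformlyOn_iff] at hR ⊢
  intro ε hε
  filter_upwards [hR ε hε, eventually_gt_atTop 0] with m hm hm0 x hx
  rw [gdiscOpt_eq hS hm0 (hKD hx), gdual_eq hS (hKD hx), Real.dist_eq]
  convert hm x hx using 1
  rw [Real.dist_eq]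
  ring_nf

lemma exists_isCompact_of_lt_dualMajorant {M : ℝ} (hM : 0 < M) (hP : 0 < P) (c : ℝ) :
    ∃ K ⊆ {x : DualParam h | 0 < x.1}, IsCompact K ∧ ∀ x ∈ {x : DualParam h | 0 < x.1},
      c < dualMajorant M P x.1 (x.2.2 ^ 2 + ∑ k, x.2.1 k ^ 2) → x ∈ K := by
  obtain ⟨l₁, l₂, R, hl₁, hbound⟩ := exists_bounds_of_lt_dualMajorant hM hP c
  refine ⟨Set.Icc l₁ l₂ ×ˢ Metric.closedBall 0 √R ×ˢ Metric.closedBall 0 √R,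
    fun x hx => hl₁.trans_le hx.1.1,
    isCompact_Icc.prod ((isCompact_closedBall _ _).prod (isCompact_closedBall _ _)),
    fun ⟨lam, η, η0⟩ hl hc => ?_⟩
  obtain ⟨hlam, hQ⟩ := hbound lam _ hl (by positivity) hc
  have hsum : ∑ k, η k ^ 2 ≤ R := by nlinarith [sq_nonneg η0]
  refine ⟨hlam, ?_, ?_⟩
  · rw [mem_closedBall_zero_iff, pi_norm_le_iff_of_nonneg (Real.sqrt_nonneg R)]
    exact fun k => Real.abs_le_sqrt
      ((Finset.single_le_sum (fun j _ => sq_nonneg (η j)) (Finset.mem_univ k)).trans hsum)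
  · rw [mem_closedBall_zero_iff, Real.norm_eq_abs]
    have : 0 ≤ ∑ k, η k ^ 2 := by positivity
    exact Real.abs_le_sqrt (by linarith)

end ParameterSpace

lemma continuous_and_pos_of_eq_sq_norm_div (p q : Polynomial ℝ)
    (hq : ∀ z : ℂ, (q.map (algebraMap ℝ ℂ)).eval z = 0 → ‖z‖ < 1)
    (hp : ∀ z : ℂ, ‖z‖ = 1 → (p.map (algebraMap ℝ ℂ)).eval z ≠ 0)
    {Sw : ℝ → ℝ}
    (hSw : ∀ θ : ℝ, Sw θ =
      (‖(p.map (algebraMap ℝ ℂ)).eval (Complex.exp ((θ : ℂ) * Complex.I)) /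
        (q.map (algebraMap ℝ ℂ)).eval (Complex.exp ((θ : ℂ) * Complex.I))‖) ^ 2) :
    Continuous Sw ∧ ∀ θ, 0 < Sw θ := by
  have hunit (θ : ℝ) : ‖Complex.exp ((θ : ℂ) * Complex.I)‖ = 1 := Complex.norm_exp_ofReal_mul_I θ
  have hq0 (θ : ℝ) : (q.map (algebraMap ℝ ℂ)).eval (Complex.exp ((θ : ℂ) * Complex.I)) ≠ 0 :=
    fun h0 => (hq _ h0).ne (hunit θ)
  refine ⟨funext hSw ▸ ?_, fun θ => hSw θ ▸ pow_pos (norm_pos_iff.2 (div_ne_zero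
    (hp _ (hunit θ)) (hq0 θ))) 2⟩
  exact ((Polynomial.continuous _).comp (by fun_prop)).div
    ((Polynomial.continuous _).comp (by fun_prop)) hq0 |>.norm.pow 2

theorem muDisc_tendsto_muh_general
    (p q : Polynomial ℝ)
    (hq : ∀ z : ℂ, (q.map (algebraMap ℝ ℂ)).eval z = 0 → ‖z‖ < 1)
    (hp : ∀ z : ℂ, ‖z‖ = 1 → (p.map (algebraMap ℝ ℂ)).eval z ≠ 0)
    (Sw : ℝ → ℝ)
    (hSw : ∀ θ : ℝ, Sw θ =
      (‖(p.map (algebraMap ℝ ℂ)).eval (Complex.exp ((θ : ℂ) * Complex.I)) /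
        (q.map (algebraMap ℝ ℂ)).eval (Complex.exp ((θ : ℂ) * Complex.I))‖) ^ 2)
    (P : ℝ) (hP : 0 < P)
    (h : ℕ) :
    Tendsto (fun m : ℕ => muDisc Sw P h m) atTop
      (nhds (- sSup {y | ∃ (lam : ℝ) (η : Fin h → ℝ) (η0 : ℝ),
        0 < lam ∧ y = gdual Sw P lam η η0})) := by
  obtain ⟨hSc, hS⟩ := continuous_and_pos_of_eq_sq_norm_div p q hq hp hSw
  obtain ⟨M, hM⟩ := (isCompact_Icc (a := -π) (b := π)).bddAbove_image hSc.continuousOn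
  have hM' : ∀ θ ∈ Set.Icc (-π) π, Sw θ ≤ M := fun θ hθ => hM (Set.mem_image_of_mem Sw hθ)
  have hMpos : 0 < M := (hS 0).trans_le (hM' 0 ⟨by linarith [pi_pos], pi_pos.le⟩)
  have hdual : {y | ∃ (lam : ℝ) (η : Fin h → ℝ) (η0 : ℝ), 0 < lam ∧ y = gdual Sw P lam η η0}
      = (fun x : DualParam h => gdual Sw P x.1 x.2.1 x.2.2) '' {x | 0 < x.1} := by
    ext y
    simp [eq_comm]
  simp only [muDisc, sSup_DdiscSet_eq hS, hdual]
  refine (tendsto_sSup_image_of_tendstoUniformlyOn_of_coercive ⟨(1, 0, 0), (one_pos : (0 : ℝ) < 1)⟩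
    (fun K hKD hK => tendstoUniformlyOn_gdiscOpt hSc hS hKD hK) ?_ ?_
    (exists_isCompact_of_lt_dualMajorant hMpos hP)).neg
  · filter_upwards [eventually_gt_atTop h] with m hm x hx
    exact gdiscOpt_le_dualMajorant hS hM' (by omega) hx
  · refine ⟨(1 / 2) * Real.log (2 * M / P), Set.forall_mem_image.2 fun x hx => ?_⟩
    have := dualMajorant_le hMpos hP hx (by positivity : 0 ≤ x.2.2 ^ 2 + ∑ k, x.2.1 k ^ 2)
    linarith [mul_pos (α := ℝ) hx hP]

/-- for fixed `h ≥ 1`, the discretized dual optimal values `μ_h(m)`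
converge, as the grid is refined, to the continuous dual optimal value
`μ_h = −sup_{λ>0,η,η₀} g(λ,η,η₀)`. -/
theorem muDisc_tendsto_muh
    (p q : Polynomial ℝ)
    (hq : ∀ z : ℂ, (q.map (algebraMap ℝ ℂ)).eval z = 0 → ‖z‖ < 1)
    (hp : ∀ z : ℂ, ‖z‖ = 1 → (p.map (algebraMap ℝ ℂ)).eval z ≠ 0)
    (Sw : ℝ → ℝ)
    (hSw : ∀ θ : ℝ, Sw θ =
      (‖(p.map (algebraMap ℝ ℂ)).eval (Complex.exp ((θ : ℂ) * Complex.I)) /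
        (q.map (algebraMap ℝ ℂ)).eval (Complex.exp ((θ : ℂ) * Complex.I))‖) ^ 2)
    (hSwnc : ¬ ∃ cst : ℝ, ∀ θ ∈ Set.Icc (-π) π, Sw θ = cst)
    (P : ℝ) (hP : 0 < P)
    (h : ℕ) (hh : 1 ≤ h) :
    Tendsto (fun m : ℕ => muDisc Sw P h m) atTop
      (nhds (- sSup {y | ∃ (lam : ℝ) (η : Fin h → ℝ) (η0 : ℝ),
        0 < lam ∧ y = gdual Sw P lam η η0})) :=
  muDisc_tendsto_muh_general p q hq hp Sw hSw P hP h
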